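/- arXiv:math/0208234 — 3 statements merged into one kernel-verified Lean document; each statement's English description precedes it below -/
import Mathlib

section
/- Let f ∈ A¹ with ‖f‖ = 1. If L is a continuous linear functional on A¹ with L(f) = ‖L‖ = 1, and ψ ∈ L^∞(D) with ‖ψ‖_∞ = 1 represents L via L(g) = ∫_D g ψ̄ dA, then ψ = f/|f| almost everywhere on D. -/
/-!
Since `‖ψ‖_∞ ≤ 1` we have `Re (f ψ̄) ≤ |f ψ̄| ≤ |f|` pointwise, while both ends integrate to `1`;
hence `f ψ̄ = |f|` almost everywhere. The zeros of the nonzero holomorphic function `f` form a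
discrete, hence null, subset of the disc, so dividing by `f̄` gives `ψ = f / |f|` almost everywhere.
-/

open MeasureTheory Metric Complex Filter
open scoped ENNReal Topology

/-- The normalized area measure `dA = (1/π) · (Lebesgue measure restricted to the unit disc)`. -/
noncomputable def dA : Measure ℂ :=
  (ENNReal.ofReal (1 / Real.pi)) • (volume.restrict (ball (0 : ℂ) 1))

/-- Membership in the Bergman space `A¹`: holomorphic on the unit disc and area-integrable. -/
def MemA1 (f : ℂ → ℂ) : Prop :=
  DifferentiableOn ℂ f (ball (0 : ℂ) 1) ∧ Integrable f dA

/-- The Bergman norm `‖f‖ = ∫_D |f| dA`. -/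
noncomputable def bergNorm (f : ℂ → ℂ) : ℝ := ∫ z, ‖f z‖ ∂dA

/-- `L` is (the restriction to `A¹` of) a linear functional. -/
def IsA1Functional (L : (ℂ → ℂ) → ℂ) : Prop :=
  (∀ f g, MemA1 f → MemA1 g → L (fun z => f z + g z) = L f + L g) ∧
  (∀ (c : ℂ) (f), MemA1 f → L (fun z => c * f z) = c * L f)

/-- `f` is a strongly exposed point of the closed unit ball of `A¹`: `f ∈ A¹`, `‖f‖ = 1`, and
there is a linear functional `L` of norm one with `L f = 1` such that any sequence in the closed
unit ball of `A¹` on which `L` tends to `1` converges to `f` in the Bergman norm. -/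
def StronglyExposed (f : ℂ → ℂ) : Prop :=
  MemA1 f ∧ bergNorm f = 1 ∧
  ∃ L : (ℂ → ℂ) → ℂ, IsA1Functional L ∧ L f = 1 ∧
    (∀ g, MemA1 g → ‖L g‖ ≤ bergNorm g) ∧
    (∀ fn : ℕ → ℂ → ℂ, (∀ n, MemA1 (fn n) ∧ bergNorm (fn n) ≤ 1) →
      Tendsto (fun n => L (fn n)) atTop (𝓝 1) →
      Tendsto (fun n => bergNorm (fun z => fn n z - f z)) atTop (𝓝 0))

/-- Membership in `(A¹)^⊥`, the annihilator of the Bergman space inside `L^∞(D)`. -/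
def InAnnA1 (ψ : ℂ → ℂ) : Prop :=
  MemLp ψ ⊤ dA ∧ ∀ f, MemA1 f → ∫ z, f z * (starRingEnd ℂ) (ψ z) ∂dA = 0

/-- Membership in `(A¹)^⊥ + C(D̄)` as a subspace of `L^∞(D)`. -/
def InAnnPlusC (φ : ℂ → ℂ) : Prop :=
  ∃ g h : ℂ → ℂ, InAnnA1 g ∧ ContinuousOn h (closedBall (0 : ℂ) 1) ∧
    ∀ᵐ z ∂dA, φ z = g z + h z

/-- The `L^∞`-distance of `φ` to the subspace `(A¹)^⊥ + C(D̄)`. -/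
noncomputable def distAnnPlusC (φ : ℂ → ℂ) : ℝ≥0∞ :=
  ⨅ (ψ : ℂ → ℂ) (_ : InAnnPlusC ψ), eLpNorm (fun z => φ z - ψ z) ⊤ dA

/-- The Bergman projection `Pψ(z) = ∫_D ψ(w)/(1 - z w̄)² dA(w)`. -/
noncomputable def bergP (ψ : ℂ → ℂ) (z : ℂ) : ℂ :=
  ∫ w, ψ w / (1 - z * (starRingEnd ℂ) w) ^ 2 ∂dA

section RCLike

variable {𝕜 : Type*} [RCLike 𝕜]

open ComplexConjugate in
theorem eq_div_norm_of_mul_conj_eq_norm {a b : 𝕜} (ha : a ≠ 0) (hab : a * conj b = ‖a‖) :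
    b = a / ‖a‖ := by
  have hconj : conj a * b = ‖a‖ := by simpa using congrArg conj hab
  have hnorm : (‖a‖ : 𝕜) ≠ 0 := by simpa using ha
  rw [eq_div_iff hnorm]
  refine mul_right_cancel₀ hnorm ?_
  calc b * ‖a‖ * ‖a‖ = conj a * b * a := by rw [mul_assoc, ← sq, ← RCLike.conj_mul]; ring
    _ = a * ‖a‖ := by rw [hconj, mul_comm]

theorem ae_eq_ofReal_of_norm_le_of_integral_eq {α : Type*} [MeasurableSpace α] {μ : Measure α}
    {g : α → 𝕜} {h : α → ℝ} (hg : Integrable g μ) (hh : Integrable h μ)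
    (hle : ∀ᵐ x ∂μ, ‖g x‖ ≤ h x) (heq : ∫ x, g x ∂μ = ((∫ x, h x ∂μ : ℝ) : 𝕜)) :
    g =ᵐ[μ] fun x => (h x : 𝕜) := by
  have hgap_nonneg : 0 ≤ᵐ[μ] fun x => h x - RCLike.re (g x) := by
    filter_upwards [hle] with x hx
    exact sub_nonneg.2 ((RCLike.re_le_norm _).trans hx)
  have hgap_int : ∫ x, (h x - RCLike.re (g x)) ∂μ = 0 := by
    rw [integral_sub hh hg.re, integral_re hg, heq, RCLike.ofReal_re, sub_self]
  filter_upwards [hle, (integral_eq_zero_iff_of_nonneg_ae hgap_nonneg (hh.sub hg.re)).1 hgap_int]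
    with x hx hgap
  have hre : RCLike.re (g x) = h x := (sub_eq_zero.1 hgap).symm
  rw [← hre, RCLike.re_eq_self_of_le (hre ▸ hx)]

end RCLike

theorem AnalyticOnNhd.ae_restrict_ne_zero {𝕜 E : Type*} [NontriviallyNormedField 𝕜]
    [MeasurableSpace 𝕜] [SecondCountableTopology 𝕜] [NormedAddCommGroup E] [NormedSpace 𝕜 E]
    {μ : Measure 𝕜} [NullSingletonClass μ] {f : 𝕜 → E} {U : Set 𝕜} {x : 𝕜}
    (hf : AnalyticOnNhd 𝕜 f U) (hU : IsConnected U) (hUm : MeasurableSet U) (hx : x ∈ U)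
    (hfx : f x ≠ 0) : ∀ᵐ z ∂μ.restrict U, f z ≠ 0 :=
  ae_restrict_le_codiscreteWithin hUm (hf.preimage_zero_mem_codiscreteWithin hfx hx hU)

theorem ae_dA_le : ae dA ≤ ae (volume.restrict (ball (0 : ℂ) 1)) :=
  Measure.ae_smul_measure_le _

theorem MemA1.ae_ne_zero {f : ℂ → ℂ} (hf : MemA1 f) (hf0 : bergNorm f ≠ 0) :
    ∀ᵐ z ∂dA, f z ≠ 0 := by
  obtain ⟨x, hx, hfx⟩ : ∃ x ∈ ball (0 : ℂ) 1, f x ≠ 0 := by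
    by_contra! hzero
    refine hf0 (integral_eq_zero_of_ae ?_)
    filter_upwards [ae_dA_le (ae_restrict_mem measurableSet_ball)] with z hz
    simp [hzero z hz]
  exact ae_dA_le ((hf.1.analyticOnNhd isOpen_ball).ae_restrict_ne_zero
    (isConnected_ball one_pos) measurableSet_ball hx hfx)

theorem exposing_representative_eq_sign_general (f ψ : ℂ → ℂ) (hf : MemA1 f) (hf1 : bergNorm f = 1)
    (hψ1 : eLpNorm ψ ⊤ dA = 1)
    (hLf : ∫ z, f z * (starRingEnd ℂ) (ψ z) ∂dA = 1) :
    ∀ᵐ z ∂dA, ψ z = f z / ((‖f z‖ : ℝ) : ℂ) := by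
  have hψ_le : ∀ᵐ z ∂dA, ‖ψ z‖ ≤ 1 := by
    have hess := ae_le_eLpNormEssSup (f := ψ) (μ := dA)
    rw [← eLpNorm_exponent_top, hψ1] at hess
    filter_upwards [hess] with z hz
    rwa [← ofReal_norm, ENNReal.ofReal_le_one] at hz
  have hpair : ∀ᵐ z ∂dA, f z * (starRingEnd ℂ) (ψ z) = ‖f z‖ := by
    have hint : ∫ z, ‖f z‖ ∂dA = 1 := hf1
    refine ae_eq_ofReal_of_norm_le_of_integral_eq (h := fun z => ‖f z‖)
      (.of_integral_ne_zero (by simp [hLf])) hf.2.norm ?_ (by rw [hLf, hint, RCLike.ofReal_one])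
    filter_upwards [hψ_le] with z hz
    rw [norm_mul, RCLike.norm_conj]
    exact mul_le_of_le_one_right (norm_nonneg _) hz
  filter_upwards [hpair, hf.ae_ne_zero (by simp [hf1])] with z hz hfz
  exact eq_div_norm_of_mul_conj_eq_norm hfz hz

theorem exposing_representative_eq_sign (f ψ : ℂ → ℂ) (hf : MemA1 f) (hf1 : bergNorm f = 1)
    (hψ : MemLp ψ ⊤ dA) (hψ1 : eLpNorm ψ ⊤ dA = 1)
    (hLnorm : ∀ g, MemA1 g →
      ‖∫ z, g z * (starRingEnd ℂ) (ψ z) ∂dA‖ ≤ bergNorm g)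
    (hLf : ∫ z, f z * (starRingEnd ℂ) (ψ z) ∂dA = 1) :
    ∀ᵐ z ∂dA, ψ z = f z / ((‖f z‖ : ℝ) : ℂ) :=
  exposing_representative_eq_sign_general f ψ hf hf1 hψ1 hLf
end

section
/- For every f ∈ A¹ of unit norm, the functional L(g) = ∫_D g · (f̄/|f|) dA is an exposing functional for f: L(f) = ‖L‖ = 1 and L(g) = 1 for g in the closed unit ball of A¹ implies g = f. Hence every unit-norm function in A¹ is an exposed point of the unit ball. -/
open MeasureTheory Metric Complex Filter
open scoped ENNReal Topology

/-!
If `g` lies in the unit ball and `∫ g · conj(f/|f|) dA = 1`, then the pointwise bound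
`Re(g · conj(f/|f|)) ≤ |g|` must be an equality almost everywhere, so `g · conj f` is real and
nonnegative a.e., hence, by continuity, real on the whole disc. Near a zero-free point of `f` the
holomorphic quotient `g / f` is then real-valued, so constant by the open mapping theorem; the
identity theorem gives `g = c f` on the disc, and evaluating the functional gives `c = 1`.
-/

open ComplexConjugate

namespace Complex

theorem mul_conj_div_norm_self (z : ℂ) : z * conj (z / ‖z‖) = ‖z‖ := by
  rcases eq_or_ne z 0 with rfl | hz
  · simp
  have hz' : (‖z‖ : ℂ) ≠ 0 := ofReal_ne_zero.mpr (norm_ne_zero_iff.mpr hz)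
  rw [map_div₀, conj_ofReal, mul_div_assoc', mul_conj, normSq_eq_norm_sq]
  push_cast
  field_simp

theorem norm_conj_div_norm_le_one (z : ℂ) : ‖conj (z / ‖z‖)‖ ≤ 1 := by
  rw [RCLike.norm_conj, norm_div, norm_real, norm_norm]
  exact div_self_le_one _

theorem norm_mul_conj_div_norm_le (w z : ℂ) : ‖w * conj (z / ‖z‖)‖ ≤ ‖w‖ := by
  rw [norm_mul]
  exact mul_le_of_le_one_right (norm_nonneg w) (norm_conj_div_norm_le_one z)

theorem mul_conj_div_norm_mul_norm (w z : ℂ) : w * conj (z / ‖z‖) * ‖z‖ = w * conj z := by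
  rcases eq_or_ne z 0 with rfl | hz
  · simp
  have hz' : (‖z‖ : ℂ) ≠ 0 := ofReal_ne_zero.mpr (norm_ne_zero_iff.mpr hz)
  rw [map_div₀, conj_ofReal]
  field_simp

theorem im_div_eq_zero_of_im_mul_conj_eq_zero {w z : ℂ} (h : (w * conj z).im = 0) :
    (w / z).im = 0 := by
  rw [mul_im, conj_re, conj_im] at h
  rw [div_im, div_sub_div_same, div_eq_zero_iff]
  left
  linarith

end Complex

open Complex

section Integral

variable {α : Type*} [MeasurableSpace α] {μ : Measure α} {f g : α → ℂ}

theorem integral_mul_conj_div_norm_self :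
    ∫ x, f x * conj (f x / ‖f x‖) ∂μ = ∫ x, ‖f x‖ ∂μ := by
  simp_rw [mul_conj_div_norm_self]
  exact integral_ofReal

theorem norm_integral_mul_conj_div_norm_le (hg : Integrable g μ) :
    ‖∫ x, g x * conj (f x / ‖f x‖) ∂μ‖ ≤ ∫ x, ‖g x‖ ∂μ :=
  (norm_integral_le_integral_norm _).trans <|
    integral_mono_of_nonneg (.of_forall fun _ => norm_nonneg _) hg.norm
      (.of_forall fun x => norm_mul_conj_div_norm_le (g x) (f x))

theorem Integrable.mul_conj_div_norm (hg : Integrable g μ) (hf : AEStronglyMeasurable f μ) :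
    Integrable (fun x => g x * conj (f x / ‖f x‖)) μ := by
  refine hg.norm.mono' ?_ (.of_forall fun x => norm_mul_conj_div_norm_le (g x) (f x))
  exact hg.aestronglyMeasurable.mul
    (continuous_conj.comp_aestronglyMeasurable
      (hf.div₀ (continuous_ofReal.comp_aestronglyMeasurable hf.norm)))

open scoped ComplexOrder in
/-- Equality case of `‖∫ u‖ ≤ ∫ b`: the nonnegative function `b - Re u` has integral `≤ 0`. -/
theorem ae_eq_ofReal_of_norm_le_of_integral_le_re {u : α → ℂ} {b : α → ℝ}
    (hu : Integrable u μ) (hb : Integrable b μ) (hle : ∀ x, ‖u x‖ ≤ b x)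
    (hint : ∫ x, b x ∂μ ≤ (∫ x, u x ∂μ).re) : ∀ᵐ x ∂μ, u x = b x := by
  have hre : Integrable (fun x => (u x).re) μ := hu.re
  have hre_int : ∫ x, (u x).re ∂μ = (∫ x, u x ∂μ).re := integral_re hu
  have hnonneg : 0 ≤ fun x => b x - (u x).re := fun x =>
    sub_nonneg.mpr ((re_le_norm _).trans (hle x))
  have hzero : ∫ x, b x - (u x).re ∂μ = 0 := by
    refine le_antisymm ?_ (integral_nonneg hnonneg)
    rw [integral_sub hb hre, hre_int]
    exact sub_nonpos.mpr hint
  filter_upwards [(integral_eq_zero_iff_of_nonneg hnonneg (hb.sub hre)).mp hzero] with x hx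
  have hbx : b x = (u x).re := sub_eq_zero.mp hx
  have hnorm : ‖u x‖ = (u x).re := le_antisymm (hbx ▸ hle x) (re_le_norm _)
  have hu_nonneg : ((0 : ℝ) : ℂ) ≤ u x := by simpa using re_eq_norm.mp hnorm.symm
  rw [hbx, ← eq_re_of_ofReal_le hu_nonneg]

end Integral

section Holomorphic

variable {U : Set ℂ} {f g φ : ℂ → ℂ}

/-- Open mapping theorem: the real axis contains no nonempty open set. -/
theorem AnalyticOnNhd.exists_eqOn_const_of_im_eq_zero (hφ : AnalyticOnNhd ℂ φ U)
    (hU : IsPreconnected U) (hUo : IsOpen U) (hne : U.Nonempty) (him : ∀ z ∈ U, (φ z).im = 0) :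
    ∃ c, ∀ z ∈ U, φ z = c := by
  refine (hφ.is_constant_or_isOpen hU).resolve_right fun hopen => ?_
  have himage : φ '' U ⊆ interior (im ⁻¹' {0}) :=
    (hopen U subset_rfl hUo).subset_interior_iff.mpr (by rintro _ ⟨z, hz, rfl⟩; exact him z hz)
  rw [interior_preimage_im, interior_singleton, Set.preimage_empty] at himage
  exact (hne.image φ).ne_empty (Set.subset_empty_iff.mp himage)

theorem exists_eqOn_const_mul_of_im_mul_conj_eq_zero (hf : DifferentiableOn ℂ f U)
    (hg : DifferentiableOn ℂ g U) (hUo : IsOpen U) (hU : IsPreconnected U) {z₀ : ℂ} (hz₀ : z₀ ∈ U)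
    (hfz₀ : f z₀ ≠ 0) (him : ∀ z ∈ U, (g z * conj (f z)).im = 0) :
    ∃ c : ℂ, Set.EqOn g (fun z => c * f z) U := by
  obtain ⟨ε, hε, hball⟩ : ∃ ε > 0, ball z₀ ε ⊆ U ∩ {z | f z ≠ 0} :=
    Metric.mem_nhds_iff.mp <| inter_mem (hUo.mem_nhds hz₀)
      ((hf.continuousOn.continuousAt (hUo.mem_nhds hz₀)).eventually_ne hfz₀)
  have hquot : AnalyticOnNhd ℂ (fun z => g z / f z) (ball z₀ ε) :=
    ((hg.mono fun z hz => (hball hz).1).div (hf.mono fun z hz => (hball hz).1)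
      fun z hz => (hball hz).2).analyticOnNhd isOpen_ball
  obtain ⟨c, hc⟩ := hquot.exists_eqOn_const_of_im_eq_zero (convex_ball z₀ ε).isPreconnected
    isOpen_ball ⟨z₀, mem_ball_self hε⟩
    fun z hz => im_div_eq_zero_of_im_mul_conj_eq_zero (him z (hball hz).1)
  refine ⟨c, (hg.analyticOnNhd hUo).eqOn_of_preconnected_of_eventuallyEq
    ((hf.const_mul c).analyticOnNhd hUo) hU hz₀ ?_⟩
  filter_upwards [isOpen_ball.mem_nhds (mem_ball_self hε)] with z hz
  rw [← hc z hz, div_mul_cancel₀ _ (hball hz).2]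

end Holomorphic

theorem ae_dA : ae dA = ae (volume.restrict (ball (0 : ℂ) 1)) :=
  Measure.ae_ennreal_smul_measure_eq (ENNReal.ofReal_pos.mpr (by positivity)).ne' _

theorem ae_mem_ball_dA : ∀ᵐ z ∂dA, z ∈ ball (0 : ℂ) 1 :=
  ae_dA ▸ ae_restrict_mem measurableSet_ball

theorem exists_mem_ball_ne_zero_of_bergNorm_ne_zero {f : ℂ → ℂ} (hf : bergNorm f ≠ 0) :
    ∃ z ∈ ball (0 : ℂ) 1, f z ≠ 0 := by
  by_contra! h
  refine hf (integral_eq_zero_of_ae ?_)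
  filter_upwards [ae_mem_ball_dA] with z hz
  simp [h z hz]

theorem unit_norm_exposed (f : ℂ → ℂ) (hf : MemA1 f) (hf1 : bergNorm f = 1) :
    (∫ z, f z * (starRingEnd ℂ) (f z / (‖f z‖ : ℂ)) ∂dA = 1) ∧
    (∀ g, MemA1 g →
      ‖∫ z, g z * (starRingEnd ℂ) (f z / (‖f z‖ : ℂ)) ∂dA‖
        ≤ bergNorm g) ∧
    (∀ g, MemA1 g → bergNorm g ≤ 1 →
      (∫ z, g z * (starRingEnd ℂ) (f z / (‖f z‖ : ℂ)) ∂dA) = 1 →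
      Set.EqOn g f (ball (0 : ℂ) 1)) := by
  have hLf : ∫ z, f z * conj (f z / ‖f z‖) ∂dA = 1 := by
    rw [integral_mul_conj_div_norm_self, ← bergNorm, hf1, ofReal_one]
  refine ⟨hLf, fun g hg => norm_integral_mul_conj_div_norm_le hg.2, fun g hg hg1 hL => ?_⟩
  have hae : ∀ᵐ z ∂dA, g z * conj (f z / ‖f z‖) = ‖g z‖ :=
    ae_eq_ofReal_of_norm_le_of_integral_le_re (Integrable.mul_conj_div_norm hg.2 hf.2.1)
      hg.2.norm (fun z => norm_mul_conj_div_norm_le _ _) (by rw [hL, one_re]; exact hg1)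
  have him : Set.EqOn (fun z => (g z * conj (f z)).im) 0 (ball 0 1) := by
    refine Measure.eqOn_open_of_ae_eq (μ := volume) ?_ isOpen_ball ?_ continuousOn_const
    · rw [← ae_dA]
      filter_upwards [hae] with z hz
      rw [← mul_conj_div_norm_mul_norm, hz, ← ofReal_mul, ofReal_im, Pi.zero_apply]
    · exact continuous_im.comp_continuousOn
        (hg.1.continuousOn.mul (continuous_conj.comp_continuousOn hf.1.continuousOn))
  obtain ⟨z₀, hz₀, hfz₀⟩ := exists_mem_ball_ne_zero_of_bergNorm_ne_zero (hf1 ▸ one_ne_zero)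
  obtain ⟨c, hc⟩ := exists_eqOn_const_mul_of_im_mul_conj_eq_zero hf.1 hg.1 isOpen_ball
    (convex_ball 0 1).isPreconnected hz₀ hfz₀ him
  have hc1 : c = 1 := calc
    c = ∫ z, c * (f z * conj (f z / ‖f z‖)) ∂dA := by rw [integral_const_mul, hLf, mul_one]
    _ = ∫ z, g z * conj (f z / ‖f z‖) ∂dA := integral_congr_ae <| by
      filter_upwards [ae_mem_ball_dA] with z hz
      rw [hc hz, mul_assoc]
    _ = 1 := hL
  simpa only [hc1, one_mul] using hc
end

section
/- Let g_n(z) = (1/n)(1−z)^{−2+1/n}. Then ‖g_n‖_{A¹} → 1 as n → ∞; indeed ∫_D |1−z|^{−2+1/n} dA(z) = Γ(1/n)/Γ(1 + 1/(2n))². -/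
/-
Translating `z ↦ 1 - z` and passing to polar coordinates centred at the boundary point `1`, the
disc becomes `{(r, θ) : |θ| < π/2, 0 < r < 2 cos θ}`, so
`∫_D |1 - z|^(ε - 2) dA = (1 / (π ε)) ∫_{-π/2}^{π/2} (2 cos θ)^ε dθ`.
The substitution `u = (1 + sin θ) / 2` turns the angular integral into the Beta integral
`4^ε B((ε + 1)/2, (ε + 1)/2)`, and Legendre's duplication formula reduces the result to
`Γ(ε) / Γ(1 + ε/2)²`. For `ε = 1/n` this gives `‖g_n‖ = Γ(1 + ε) / Γ(1 + ε/2)²`, which tends to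
`Γ(1) / Γ(1)² = 1` by continuity of `Γ` at `1`.
-/
open MeasureTheory Metric Complex Filter
open scoped ENNReal Topology

open Set Real

theorem integral_Ioo_rpow_mul_one_sub_rpow {a b : ℝ} (ha : 0 < a) (hb : 0 < b) :
    ∫ u in Ioo (0 : ℝ) 1, u ^ (a - 1) * (1 - u) ^ (b - 1)
      = Real.Gamma a * Real.Gamma b / Real.Gamma (a + b) := by
  have hbeta : Complex.betaIntegral a b
      = ↑(∫ u in Ioo (0 : ℝ) 1, u ^ (a - 1) * (1 - u) ^ (b - 1)) := by
    rw [Complex.betaIntegral, intervalIntegral.integral_of_le zero_le_one,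
      ← integral_Ioc_eq_integral_Ioo, ← integral_complex_ofReal]
    refine setIntegral_congr_fun measurableSet_Ioc fun u hu => ?_
    rw [Complex.ofReal_mul, Complex.ofReal_cpow hu.1.le, Complex.ofReal_cpow (by linarith [hu.2]),
      Complex.ofReal_sub, Complex.ofReal_sub, Complex.ofReal_sub, Complex.ofReal_one]
  have hGamma := Complex.betaIntegral_eq_Gamma_mul_div a b (by simpa using ha) (by simpa using hb)
  rw [hbeta, ← Complex.ofReal_add, Complex.Gamma_ofReal, Complex.Gamma_ofReal,
    Complex.Gamma_ofReal] at hGamma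
  exact_mod_cast hGamma

theorem integral_cos_rpow {ε : ℝ} (hε : -1 < ε) :
    ∫ θ in Ioo (-(π / 2)) (π / 2), Real.cos θ ^ ε
      = 2 ^ ε * (Real.Gamma ((ε + 1) / 2) ^ 2 / Real.Gamma (ε + 1)) := by
  set f : ℝ → ℝ := fun θ => (1 + Real.sin θ) / 2
  have hmono : StrictMonoOn f (Icc (-(π / 2)) (π / 2)) := fun x hx y hy hxy => by
    simp only [f]; linarith [strictMonoOn_sin hx hy hxy]
  have himage : f '' Ioo (-(π / 2)) (π / 2) = Ioo 0 1 := by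
    rw [(by fun_prop : Continuous f).continuousOn.image_Ioo_of_strictMonoOn
      (by linarith [pi_pos]) hmono]
    simp [f]
  have hderiv : ∀ θ, HasDerivAt f (Real.cos θ / 2) θ := fun θ =>
    ((Real.hasDerivAt_sin θ).const_add 1).div_const 2
  have hsubst : ∫ u in Ioo (0 : ℝ) 1, 2 ^ ε * (u ^ ((ε + 1) / 2 - 1) * (1 - u) ^ ((ε + 1) / 2 - 1))
      = ∫ θ in Ioo (-(π / 2)) (π / 2), Real.cos θ ^ ε := by
    rw [← himage, integral_image_eq_integral_abs_deriv_smul measurableSet_Ioo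
      (fun θ _ => (hderiv θ).hasDerivWithinAt) (hmono.injOn.mono Ioo_subset_Icc_self)]
    refine setIntegral_congr_fun measurableSet_Ioo fun θ hθ => ?_
    have hcos : 0 < Real.cos θ := cos_pos_of_mem_Ioo hθ
    have hc : 0 < Real.cos θ / 2 := by positivity
    have hprod : f θ * (1 - f θ) = (Real.cos θ / 2) ^ (2 : ℝ) := by
      simp only [f, rpow_two]; nlinarith [Real.sin_sq_add_cos_sq θ]
    rw [smul_eq_mul, ← mul_rpow (by simp only [f]; linarith [neg_one_le_sin θ])
      (by simp only [f]; linarith [sin_le_one θ]), hprod, ← rpow_mul hc.le, abs_of_pos hc,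
      show 2 * ((ε + 1) / 2 - 1) = ε - 1 by ring, rpow_sub_one hc.ne', div_rpow hcos.le zero_le_two]
    field_simp
  rw [← hsubst, integral_const_mul, integral_Ioo_rpow_mul_one_sub_rpow (by linarith) (by linarith),
    ← sq, add_halves]

theorem Real.two_rpow_mul_Gamma_mul_Gamma (ε : ℝ) :
    2 ^ ε * Real.Gamma ((ε + 1) / 2) * Real.Gamma (1 + ε / 2) = √π * Real.Gamma (ε + 1) := by
  rcases eq_or_ne ε 0 with rfl | hε
  · norm_num [Real.Gamma_one_half_eq]
  have hdup := Real.Gamma_mul_Gamma_add_half (ε / 2)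
  rw [show 2 * (ε / 2) = ε by ring, show ε / 2 + 1 / 2 = (ε + 1) / 2 by ring,
    rpow_sub zero_lt_two, rpow_one] at hdup
  rw [add_comm 1, Real.Gamma_add_one (by simpa using hε), Real.Gamma_add_one hε]
  field_simp at hdup ⊢
  linear_combination hdup

theorem integral_two_mul_cos_rpow {ε : ℝ} (hε : -1 < ε) :
    ∫ θ in Ioo (-(π / 2)) (π / 2), (2 * Real.cos θ) ^ ε
      = π * Real.Gamma (ε + 1) / Real.Gamma (1 + ε / 2) ^ 2 := by
  have hcos : ∀ θ ∈ Ioo (-(π / 2)) (π / 2), (2 * Real.cos θ) ^ ε = 2 ^ ε * Real.cos θ ^ ε :=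
    fun θ hθ => mul_rpow zero_le_two (cos_pos_of_mem_Ioo hθ).le
  have hΓ : 0 < Real.Gamma (1 + ε / 2) := Real.Gamma_pos_of_pos (by linarith)
  have h2Γ : 2 ^ ε * Real.Gamma ((ε + 1) / 2)
      = √π * Real.Gamma (ε + 1) / Real.Gamma (1 + ε / 2) := by
    rw [eq_div_iff hΓ.ne', Real.two_rpow_mul_Gamma_mul_Gamma]
  rw [setIntegral_congr_fun measurableSet_Ioo hcos, integral_const_mul, integral_cos_rpow hε,
    show 2 ^ ε * (2 ^ ε * (Real.Gamma ((ε + 1) / 2) ^ 2 / Real.Gamma (ε + 1)))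
      = (2 ^ ε * Real.Gamma ((ε + 1) / 2)) ^ 2 / Real.Gamma (ε + 1) by ring,
    h2Γ, div_pow, mul_pow, Real.sq_sqrt pi_pos.le]
  field_simp

theorem lintegral_Ioo_rpow_sub_one {ε c : ℝ} (hε : 0 < ε) (hc : 0 ≤ c) :
    ∫⁻ r in Ioo 0 c, ENNReal.ofReal (r ^ (ε - 1)) = ENNReal.ofReal (c ^ ε / ε) := by
  have hint : IntegrableOn (fun r : ℝ => r ^ (ε - 1)) (Ioo 0 c) :=
    (intervalIntegrable_iff_integrableOn_Ioo_of_le hc).1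
      (intervalIntegral.intervalIntegrable_rpow' (by linarith))
  rw [← ofReal_integral_eq_lintegral_ofReal hint
    (ae_restrict_of_forall_mem measurableSet_Ioo fun r hr => rpow_nonneg hr.1.le _),
    ← integral_Ioc_eq_integral_Ioo, ← intervalIntegral.integral_of_le hc,
    integral_rpow (Or.inl (by linarith)), sub_add_cancel, zero_rpow hε.ne', sub_zero]

theorem Real.cos_pos_iff_mem_Ioo {θ : ℝ} (hθ : θ ∈ Ioo (-π) π) :
    0 < Real.cos θ ↔ θ ∈ Ioo (-(π / 2)) (π / 2) := by
  rw [← Real.Angle.cos_coe, Real.Angle.cos_pos_iff_abs_toReal_lt_pi_div_two,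
    Real.Angle.toReal_coe_eq_self_iff.2 ⟨hθ.1, hθ.2.le⟩, abs_lt, mem_Ioo]

theorem Complex.polarCoord_symm_mem_ball_one_iff {r : ℝ} (hr : 0 < r) (θ : ℝ) :
    Complex.polarCoord.symm (r, θ) ∈ ball (1 : ℂ) 1 ↔ r < 2 * Real.cos θ := by
  have hnormSq : normSq (Complex.polarCoord.symm (r, θ) - 1) = r * (r - 2 * Real.cos θ) + 1 := by
    rw [Complex.polarCoord_symm_apply, normSq_apply]
    simp only [ofReal_cos, ofReal_sin, sub_re, mul_re, ofReal_re, add_re, cos_ofReal_re,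
      sin_ofReal_re, I_re, mul_zero, sin_ofReal_im, I_im, mul_one, sub_self, add_zero, ofReal_im,
      add_im, cos_ofReal_im, mul_im, zero_add, zero_mul, sub_zero, one_re, sub_im, one_im]
    linear_combination r ^ 2 * Real.sin_sq_add_cos_sq θ
  rw [mem_ball, dist_eq, ← sq_lt_one_iff₀ (norm_nonneg _), ← normSq_eq_norm_sq, hnormSq]
  constructor <;> intro h <;> nlinarith

theorem setLIntegral_ball_zero_comp_one_sub (f : ℂ → ℝ≥0∞) :
    ∫⁻ z in ball (0 : ℂ) 1, f (1 - z) = ∫⁻ z in ball (1 : ℂ) 1, f z := by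
  have hpreimage : (fun z : ℂ => 1 - z) ⁻¹' ball 1 1 = ball 0 1 := by
    ext z; simp
  rw [← hpreimage]
  exact (Measure.measurePreserving_sub_left volume (1 : ℂ)).setLIntegral_comp_preimage_emb
    (measurableEmbedding_subLeft (1 : ℂ)) f (ball 1 1)

theorem lintegral_ball_one_comp_norm {f : ℝ → ℝ≥0∞} (hf : Measurable f) :
    ∫⁻ z in ball (1 : ℂ) 1, f ‖z‖
      = ∫⁻ θ in Ioo (-(π / 2)) (π / 2), ∫⁻ r in Ioo 0 (2 * Real.cos θ), ENNReal.ofReal r * f r := by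
  set F : ℝ × ℝ → ℝ≥0∞ := fun p =>
    ENNReal.ofReal p.1 • (ball (1 : ℂ) 1).indicator (fun z => f ‖z‖) (Complex.polarCoord.symm p)
  have hF : Measurable F :=
    measurable_fst.ennreal_ofReal.smul ((hf.comp measurable_norm).indicator measurableSet_ball
      |>.comp (measurableEquivRealProd.symm.measurable.comp continuous_polarCoord_symm.measurable))
  have hslice : ∀ θ, ∫⁻ r in Ioi 0, F (r, θ)
      = ∫⁻ r in Ioo 0 (2 * Real.cos θ), ENNReal.ofReal r * f r := by
    intro θ
    rw [← Ioi_inter_Iio, inter_comm, ← Measure.restrict_restrict measurableSet_Iio,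
      ← lintegral_indicator measurableSet_Iio]
    refine setLIntegral_congr_fun measurableSet_Ioi fun r (hr : 0 < r) => ?_
    simp only [F, indicator, Complex.polarCoord_symm_mem_ball_one_iff hr, mem_Iio,
      Complex.norm_polarCoord_symm, abs_of_pos hr, smul_eq_mul]
    split_ifs <;> simp
  have hvanish : ∀ θ ∈ Ioo (-π) π \ Ioo (-(π / 2)) (π / 2),
      ∫⁻ r in Ioo 0 (2 * Real.cos θ), ENNReal.ofReal r * f r = 0 := by
    rintro θ ⟨hθ, hθ'⟩
    have : Real.cos θ ≤ 0 := not_lt.1 fun h => hθ' ((Real.cos_pos_iff_mem_Ioo hθ).1 h)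
    rw [Ioo_eq_empty (by linarith), Measure.restrict_empty, lintegral_zero_measure]
  calc ∫⁻ z in ball (1 : ℂ) 1, f ‖z‖
      = ∫⁻ p in polarCoord.target, F p := by
        rw [← lintegral_indicator measurableSet_ball, ← Complex.lintegral_comp_polarCoord_symm]
    _ = ∫⁻ θ in Ioo (-π) π, ∫⁻ r in Ioo 0 (2 * Real.cos θ), ENNReal.ofReal r * f r := by
        rw [polarCoord_target, Measure.volume_eq_prod, ← Measure.prod_restrict,
          lintegral_prod_symm' F hF]
        simp_rw [hslice]
    _ = _ := by
        rw [← lintegral_inter_add_sdiff _ (Ioo (-π) π) measurableSet_Ioo,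
          setLIntegral_eq_zero (measurableSet_Ioo.diff measurableSet_Ioo) hvanish, add_zero,
          inter_eq_right.2 (Ioo_subset_Ioo (by linarith [pi_pos]) (by linarith [pi_pos]))]

theorem lintegral_ball_zero_norm_one_sub_rpow {ε : ℝ} (hε : 0 < ε) :
    ∫⁻ z in ball (0 : ℂ) 1, ENNReal.ofReal (‖1 - z‖ ^ (ε - 2))
      = ENNReal.ofReal (π * (Real.Gamma ε / Real.Gamma (1 + ε / 2) ^ 2)) := by
  set I := Ioo (-(π / 2)) (π / 2)
  have hslice : ∀ θ ∈ I, ∫⁻ r in Ioo 0 (2 * Real.cos θ),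
      ENNReal.ofReal r * ENNReal.ofReal (r ^ (ε - 2))
        = ENNReal.ofReal ((2 * Real.cos θ) ^ ε / ε) := by
    intro θ hθ
    rw [← lintegral_Ioo_rpow_sub_one hε (by linarith [cos_pos_of_mem_Ioo hθ])]
    refine setLIntegral_congr_fun measurableSet_Ioo fun r hr => ?_
    rw [← ENNReal.ofReal_mul hr.1.le, show ε - 1 = 1 + (ε - 2) by ring, rpow_add hr.1, rpow_one]
  have hint : IntegrableOn (fun θ => (2 * Real.cos θ) ^ ε / ε) I :=
    ((by fun_prop (disch := exact hε.le) : Continuous fun θ => (2 * Real.cos θ) ^ ε / ε)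
      |>.integrableOn_Icc).mono_set Ioo_subset_Icc_self
  have hnonneg : ∀ θ ∈ I, 0 ≤ (2 * Real.cos θ) ^ ε / ε := fun θ hθ => by
    have := cos_pos_of_mem_Ioo hθ; positivity
  calc ∫⁻ z in ball (0 : ℂ) 1, ENNReal.ofReal (‖1 - z‖ ^ (ε - 2))
      = ∫⁻ θ in I, ∫⁻ r in Ioo 0 (2 * Real.cos θ),
          ENNReal.ofReal r * ENNReal.ofReal (r ^ (ε - 2)) := by
        rw [setLIntegral_ball_zero_comp_one_sub (fun z => ENNReal.ofReal (‖z‖ ^ (ε - 2)))]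
        exact lintegral_ball_one_comp_norm (f := fun r => ENNReal.ofReal (r ^ (ε - 2)))
          (by fun_prop)
    _ = ∫⁻ θ in I, ENNReal.ofReal ((2 * Real.cos θ) ^ ε / ε) :=
        setLIntegral_congr_fun measurableSet_Ioo hslice
    _ = ENNReal.ofReal (∫ θ in I, (2 * Real.cos θ) ^ ε / ε) :=
        (ofReal_integral_eq_lintegral_ofReal hint
          (ae_restrict_of_forall_mem measurableSet_Ioo hnonneg)).symm
    _ = _ := by
        rw [integral_div, integral_two_mul_cos_rpow (by linarith), Real.Gamma_add_one hε.ne']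
        field_simp

theorem integral_norm_one_sub_rpow_dA {ε : ℝ} (hε : 0 < ε) :
    ∫ z, ‖1 - z‖ ^ (-2 + ε) ∂dA = Real.Gamma ε / Real.Gamma (1 + ε / 2) ^ 2 := by
  rw [dA, integral_smul_measure, integral_eq_lintegral_of_nonneg_ae
      (ae_of_all _ fun z => rpow_nonneg (norm_nonneg _) _)
      (by fun_prop : Measurable fun z : ℂ => ‖1 - z‖ ^ (-2 + ε)).aestronglyMeasurable,
    neg_add_eq_sub, lintegral_ball_zero_norm_one_sub_rpow hε, ENNReal.toReal_ofReal (by positivity),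
    ENNReal.toReal_ofReal (by positivity), smul_eq_mul]
  field_simp

theorem bergNorm_mul_one_sub_cpow {ε : ℝ} (hε : 0 < ε) :
    bergNorm (fun z => (ε : ℂ) * (1 - z) ^ ((-2 + ε : ℝ) : ℂ))
      = Real.Gamma (1 + ε) / Real.Gamma (1 + ε / 2) ^ 2 := by
  simp_rw [bergNorm, norm_mul, norm_cpow_real, Complex.norm_real, Real.norm_of_nonneg hε.le]
  rw [integral_const_mul, integral_norm_one_sub_rpow_dA hε, add_comm 1 ε, Real.Gamma_add_one hε.ne']
  ring

theorem tendsto_Gamma_one_add_div_Gamma_one_add_half_sq :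
    Tendsto (fun ε => Real.Gamma (1 + ε) / Real.Gamma (1 + ε / 2) ^ 2) (𝓝 0) (𝓝 1) := by
  have hΓ : ContinuousAt Real.Gamma 1 :=
    (Real.differentiableOn_Gamma_Ioi.differentiableAt (Ioi_mem_nhds one_pos)).continuousAt
  have hcont : ContinuousAt (fun ε => Real.Gamma (1 + ε) / Real.Gamma (1 + ε / 2) ^ 2) 0 :=
    (hΓ.comp_of_eq (by fun_prop) (by simp)).div ((hΓ.comp_of_eq (by fun_prop) (by simp)).pow 2)
      (by simp)
  simpa using hcont.tendsto

theorem gn_norm_tendsto_one :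
    (∀ n : ℕ, 0 < n →
      ∫ z, ‖1 - z‖ ^ (-2 + 1 / (n : ℝ)) ∂dA
        = Real.Gamma (1 / (n : ℝ)) / (Real.Gamma (1 + 1 / (2 * (n : ℝ)))) ^ 2) ∧
    Tendsto (fun n : ℕ =>
        bergNorm (fun z => (1 / (n : ℂ)) * (1 - z) ^ ((-2 + 1 / (n : ℝ) : ℝ) : ℂ)))
      atTop (𝓝 1) := by
  refine ⟨fun n hn => ?_, ?_⟩
  · rw [integral_norm_one_sub_rpow_dA (by positivity), show 1 / (n : ℝ) / 2 = 1 / (2 * n) by ring]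
  · have hnorm : ∀ᶠ n : ℕ in atTop,
        Real.Gamma (1 + 1 / (n : ℝ)) / Real.Gamma (1 + 1 / (n : ℝ) / 2) ^ 2
          = bergNorm (fun z => (1 / (n : ℂ)) * (1 - z) ^ ((-2 + 1 / (n : ℝ) : ℝ) : ℂ)) := by
      filter_upwards [eventually_gt_atTop 0] with n hn
      rw [← bergNorm_mul_one_sub_cpow (by positivity), Complex.ofReal_div, Complex.ofReal_one,
        Complex.ofReal_natCast]
    exact (tendsto_Gamma_one_add_div_Gamma_one_add_half_sq.comp
      tendsto_one_div_atTop_nhds_zero_nat).congr' hnorm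
end
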